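/- arXiv:1306.4683 — 5 statements merged into one kernel-verified Lean document; each statement's English description precedes it below -/
import Mathlib

section
/- Let {ρ_i}_{i=1}^k be density matrices on a d-dimensional complex Hilbert space, prepared with probabilities p_i, and write ρ̃_i = p_i ρ_i. Let {M_i}_{i=1}^k be a measurement (POVM) such that the matrix N = ∑_{i=1}^k ρ̃_i M_i is Hermitian and ρ̃_i − N is positive semidefinite for every i. Then {M_i} is an optimal exclusion measurement: for every measurement (POVM) {M'_i}_{i=1}^k, ∑_{i=1}^k tr(ρ̃_i M_i) ≤ ∑_{i=1}^k tr(ρ̃_i M'_i). (Sufficiency direction of Theorem 1.) -/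
/-! Weak duality for the exclusion SDP: with `N = ∑ⱼ ρ̃ⱼ Mⱼ` and any POVM `M'`,
`∑ᵢ tr(ρ̃ᵢ M'ᵢ) = tr N + ∑ᵢ tr((ρ̃ᵢ - N) M'ᵢ)` because `∑ᵢ M'ᵢ = 1`, and each term of the last sum
is the trace of a product of two positive semidefinite matrices, hence nonnegative. -/

open Matrix BigOperators ComplexOrder

namespace Matrix

open scoped MatrixOrder

variable {n 𝕜 : Type*} [Fintype n] [RCLike 𝕜]

theorem PosSemidef.trace_mul_nonneg {A B : Matrix n n 𝕜} (hA : A.PosSemidef)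
    (hB : B.PosSemidef) : 0 ≤ (A * B).trace := by
  classical
  obtain ⟨X, rfl⟩ := CStarAlgebra.nonneg_iff_eq_star_mul_self.mp hA.nonneg
  rw [star_eq_conjTranspose, mul_assoc, trace_mul_comm]
  exact (hB.mul_mul_conjTranspose_same X).trace_nonneg

theorem trace_le_sum_trace_mul_of_posSemidef_sub [DecidableEq n] {ι : Type*} [Fintype ι]
    {A E : ι → Matrix n n 𝕜} {N : Matrix n n 𝕜} (hAN : ∀ i, (A i - N).PosSemidef)
    (hE : ∀ i, (E i).PosSemidef) (hEsum : ∑ i, E i = 1) :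
    N.trace ≤ ∑ i, (A i * E i).trace :=
  calc N.trace
      ≤ N.trace + ∑ i, ((A i - N) * E i).trace :=
        le_add_of_nonneg_right <| Finset.sum_nonneg fun i _ ↦ (hAN i).trace_mul_nonneg (hE i)
    _ = ∑ i, (A i * E i).trace := by
        simp only [sub_mul, trace_sub, Finset.sum_sub_distrib, ← trace_sum, ← Finset.mul_sum,
          hEsum, mul_one, add_sub_cancel]

end Matrix

theorem state_exclusion_optimal_of_dual_feasible_general
    {d k : ℕ} (ρ : Fin k → Matrix (Fin d) (Fin d) ℂ)
    (p : Fin k → ℝ)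
    (M : Fin k → Matrix (Fin d) (Fin d) ℂ)
    (hNfeas : ∀ i, ((p i : ℂ) • ρ i - ∑ j, (p j : ℂ) • ρ j * M j).PosSemidef) :
    ∀ M' : Fin k → Matrix (Fin d) (Fin d) ℂ,
      (∀ i, (M' i).PosSemidef) → (∑ i, M' i = 1) →
      (∑ i, ((p i : ℂ) • ρ i * M i).trace).re ≤ (∑ i, ((p i : ℂ) • ρ i * M' i).trace).re := by
  intro M' hM' hM'sum
  rw [← trace_sum]
  exact (Complex.le_def.mp (trace_le_sum_trace_mul_of_posSemidef_sub hNfeas hM' hM'sum)).1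

/-- Sufficiency direction of Theorem 1: if `N = ∑ ρ̃ᵢ Mᵢ` is Hermitian and
`ρ̃ᵢ - N` is positive semidefinite for all `i`, then the measurement `M`
is optimal for state exclusion. -/
theorem state_exclusion_optimal_of_dual_feasible
    {d k : ℕ} (ρ : Fin k → Matrix (Fin d) (Fin d) ℂ)
    (hρ : ∀ i, (ρ i).PosSemidef) (hρtr : ∀ i, (ρ i).trace = 1)
    (p : Fin k → ℝ) (hp : ∀ i, 0 ≤ p i) (hpsum : ∑ i, p i = 1)
    (M : Fin k → Matrix (Fin d) (Fin d) ℂ)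
    (hM : ∀ i, (M i).PosSemidef) (hMsum : ∑ i, M i = 1)
    (hNherm : (∑ i, (p i : ℂ) • ρ i * M i).IsHermitian)
    (hNfeas : ∀ i, ((p i : ℂ) • ρ i - ∑ j, (p j : ℂ) • ρ j * M j).PosSemidef) :
    ∀ M' : Fin k → Matrix (Fin d) (Fin d) ℂ,
      (∀ i, (M' i).PosSemidef) → (∑ i, M' i = 1) →
      (∑ i, ((p i : ℂ) • ρ i * M i).trace).re ≤ (∑ i, ((p i : ℂ) • ρ i * M' i).trace).re :=
  state_exclusion_optimal_of_dual_feasible_general ρ p M hNfeas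
end

section
/- Let {ρ_i}_{i=1}^k be density matrices on a d-dimensional complex Hilbert space, prepared with probabilities p_i, and write ρ̃_i = p_i ρ_i. Suppose {M_i}_{i=1}^k is a measurement (POVM) that is optimal for state exclusion, i.e. ∑_{i=1}^k tr(ρ̃_i M_i) ≤ ∑_{i=1}^k tr(ρ̃_i M'_i) for every measurement (POVM) {M'_i}_{i=1}^k. Then the matrix N = ∑_{i=1}^k ρ̃_i M_i is Hermitian and ρ̃_i − N is positive semidefinite for every i. (Necessity direction of Theorem 1.) -/
/-!
Perturb the optimal measurement by a contraction `K = 1 - ε w x xᴴ`: the outcomes become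
`K Mᵢ Kᴴ`, and the deficit `1 - K Kᴴ`, a nonnegative multiple of `x xᴴ` for small `ε > 0`
whenever `Re w > 0`, is added to outcome `j`. To first order in `ε` the error probability
changes by `2 ε Re (w̄ · xᴴ (ρ̃ⱼ - N) x)`, so optimality forces this to be nonnegative for
every such `w`. Letting `w` range over `1 + i t`, `t ∈ ℝ`, shows that `xᴴ (ρ̃ⱼ - N) x` is a
nonnegative real number, i.e. `ρ̃ⱼ - N ⪰ 0`; hence `N = ρ̃ⱼ - (ρ̃ⱼ - N)` is Hermitian.
-/

open Matrix BigOperators ComplexOrder Filter Topology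

theorem Complex.nonneg_of_forall_re_star_mul_nonneg {z : ℂ}
    (h : ∀ w : ℂ, 0 < w.re → 0 ≤ (star w * z).re) : 0 ≤ z := by
  have hre : ∀ t : ℝ, 0 ≤ z.re + t * z.im := fun t => by
    simpa [Complex.mul_re] using h (1 + t * Complex.I) (by simp)
  refine Complex.nonneg_iff.2 ⟨by simpa using hre 0, ?_⟩
  by_contra him
  have := hre (-(z.re + 1) / z.im)
  field_simp at this
  linarith

theorem nonneg_of_eventually_nonneg_mul_add_sq_mul {a b : ℝ}
    (h : ∀ᶠ ε in 𝓝[>] (0 : ℝ), 0 ≤ ε * a + ε ^ 2 * b) : 0 ≤ a := by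
  have hlim : Tendsto (fun ε : ℝ => a + ε * b) (𝓝[>] 0) (𝓝 a) := by
    have : Continuous (fun ε : ℝ => a + ε * b) := by fun_prop
    simpa using (this.tendsto 0).mono_left nhdsWithin_le_nhds
  refine ge_of_tendsto hlim ?_
  filter_upwards [h, self_mem_nhdsWithin] with ε hε (hε0 : 0 < ε)
  exact nonneg_of_mul_nonneg_right (by linear_combination hε) hε0

namespace Matrix

variable {n : Type*} [Fintype n]

theorem trace_mul_vecMulVec {R : Type*} [CommSemiring R] (D : Matrix n n R) (x y : n → R) :
    (D * vecMulVec x y).trace = y ⬝ᵥ D *ᵥ x := by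
  rw [trace_mul_comm, vecMulVec_mul, trace_vecMulVec, dotProduct_comm, dotProduct_mulVec]

theorem re_trace_mul_mul_eq_re_trace_mul_mul_conjTranspose {X Y : Matrix n n ℂ}
    (hX : X.IsHermitian) (hY : Y.IsHermitian) (A : Matrix n n ℂ) :
    (X * A * Y).trace.re = (X * Y * Aᴴ).trace.re := by
  rw [← Complex.conj_re, starRingEnd_apply, ← trace_conjTranspose, conjTranspose_mul,
    conjTranspose_mul, hX.eq, hY.eq, ← mul_assoc, trace_mul_cycle]

variable [DecidableEq n]

theorem posSemidef_of_forall_dotProduct_mulVec_nonneg {A : Matrix n n ℂ}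
    (h : ∀ x, 0 ≤ star x ⬝ᵥ A *ᵥ x) : A.PosSemidef := by
  rw [← isPositive_toEuclideanLin_iff, LinearMap.isPositive_iff_complex]
  intro x
  obtain ⟨r, hr, hrx⟩ := RCLike.nonneg_iff_exists_ofReal.1 (star_nonneg_iff.2 (h x.ofLp))
  rw [star_dotProduct, star_star, dotProduct_comm] at hrx
  rw [EuclideanSpace.inner_eq_star_dotProduct, toLpLin_apply, ← hrx]
  simpa using hr

theorem eventually_posSemidef_one_sub_mul_conjTranspose_of_rankOne (x : n → ℂ) {w : ℂ}
    (hw : 0 < w.re) :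
    ∀ᶠ ε in 𝓝[>] (0 : ℝ), (1 - (1 - (ε : ℂ) • w • vecMulVec x (star x)) *
      (1 - (ε : ℂ) • w • vecMulVec x (star x))ᴴ).PosSemidef := by
  have hP := posSemidef_vecMulVec_self_star x
  obtain ⟨s, hs, hsx⟩ := RCLike.nonneg_iff_exists_ofReal.1 (dotProduct_star_self_nonneg x)
  have hPP : vecMulVec x (star x) * vecMulVec x (star x) = (s : ℂ) • vecMulVec x (star x) := by
    rw [vecMulVec_mul_vecMulVec, ← hsx]
    exact vecMulVec_smul _ _ _
  set P := vecMulVec x (star x)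
  have hsmall : ∀ᶠ ε in 𝓝[>] (0 : ℝ), ε * (Complex.normSq w * s) < 2 * w.re := by
    have : Continuous (fun ε : ℝ => ε * (Complex.normSq w * s)) := by fun_prop
    exact nhdsWithin_le_nhds ((this.tendsto 0).eventually (gt_mem_nhds (by simpa using hw)))
  filter_upwards [hsmall, self_mem_nhdsWithin] with ε hε (hε0 : 0 < ε)
  have hcoef : ((2 * ε * w.re - ε ^ 2 * Complex.normSq w * s : ℝ) : ℂ) =
      ε * w + star (ε * w) - star (ε * w) * (ε * w) * s := by
    push_cast
    rw [Complex.re_eq_add_conj, Complex.normSq_eq_conj_mul_self]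
    simp only [Complex.star_def, map_mul, Complex.conj_ofReal]
    ring
  have hdeficit : 1 - (1 - (ε : ℂ) • w • P) * (1 - (ε : ℂ) • w • P)ᴴ =
      ((2 * ε * w.re - ε ^ 2 * Complex.normSq w * s : ℝ) : ℂ) • P := by
    simp only [hcoef, smul_smul, conjTranspose_sub, conjTranspose_one, conjTranspose_smul,
      hP.1.eq, mul_sub, sub_mul, one_mul, mul_one, smul_mul_assoc, mul_smul_comm, hPP]
    module
  rw [hdeficit]
  exact hP.smul (Complex.zero_le_real.2 (by nlinarith))

end Matrix

section POVM

variable {ι n : Type*} [Fintype ι] [DecidableEq ι] [Fintype n] [DecidableEq n]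

def IsPOVM (M : ι → Matrix n n ℂ) : Prop :=
  (∀ i, (M i).PosSemidef) ∧ ∑ i, M i = 1

/-- `σ i` stands for the weighted state `ρ̃ᵢ = pᵢ ρᵢ`; outcome `i` asserts that the state is not
`ρᵢ`, so this is the probability of a wrong exclusion. -/
def exclusionErrorProb (σ M : ι → Matrix n n ℂ) : ℝ :=
  (∑ i, (σ i * M i).trace).re

def contractPOVM (K : Matrix n n ℂ) (M : ι → Matrix n n ℂ) (j : ι) : ι → Matrix n n ℂ :=
  fun i => K * M i * Kᴴ + if i = j then 1 - K * Kᴴ else 0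

theorem IsPOVM.contractPOVM {M : ι → Matrix n n ℂ} (hM : IsPOVM M) {K : Matrix n n ℂ}
    (hK : (1 - K * Kᴴ).PosSemidef) (j : ι) : IsPOVM (contractPOVM K M j) := by
  refine ⟨fun i => (hM.1 i).mul_mul_conjTranspose_same K |>.add ?_, ?_⟩
  · split_ifs
    exacts [hK, .zero]
  · simp only [_root_.contractPOVM, Finset.sum_add_distrib, ← Finset.sum_mul, ← Finset.mul_sum,
      hM.2, Finset.sum_ite_eq', Finset.mem_univ, if_true, mul_one, add_sub_cancel]

theorem exclusionErrorProb_contractPOVM_one_sub {σ M : ι → Matrix n n ℂ}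
    (hσ : ∀ i, (σ i).IsHermitian) (hM : ∀ i, (M i).IsHermitian) (A : Matrix n n ℂ) (j : ι) :
    exclusionErrorProb σ (contractPOVM (1 - A) M j) = exclusionErrorProb σ M
      + 2 * ((σ j - ∑ i, σ i * M i) * Aᴴ).trace.re
      + (∑ i, (σ i * A * M i * Aᴴ).trace - (σ j * A * Aᴴ).trace).re := by
  have hexpand : ∀ i, σ i * contractPOVM (1 - A) M j i =
      σ i * M i - σ i * M i * Aᴴ - σ i * A * M i + σ i * A * M i * Aᴴ +
        if i = j then σ i * A + σ i * Aᴴ - σ i * A * Aᴴ else 0 := by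
    intro i
    simp only [_root_.contractPOVM, conjTranspose_sub, conjTranspose_one]
    split_ifs <;> noncomm_ring
  have hj := re_trace_mul_mul_eq_re_trace_mul_mul_conjTranspose (hσ j) isHermitian_one A
  simp only [mul_one] at hj
  simp only [exclusionErrorProb, hexpand, apply_ite trace, trace_zero, trace_add, trace_sub,
    Finset.sum_add_distrib, Finset.sum_sub_distrib, Complex.add_re, Complex.sub_re,
    Complex.re_sum, re_trace_mul_mul_eq_re_trace_mul_mul_conjTranspose (hσ _) (hM _),
    Finset.sum_ite_eq', Finset.mem_univ, if_true, sub_mul, Finset.sum_mul, trace_sum, hj]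
  ring

variable {σ M : ι → Matrix n n ℂ} (hσ : ∀ i, (σ i).IsHermitian) (hM : IsPOVM M)
  (hopt : ∀ M', IsPOVM M' → exclusionErrorProb σ M ≤ exclusionErrorProb σ M')
include hσ hM hopt

theorem IsPOVM.re_trace_mul_conjTranspose_nonneg_of_optimal (j : ι) {B : Matrix n n ℂ}
    (hB : ∀ᶠ ε in 𝓝[>] (0 : ℝ), (1 - (1 - (ε : ℂ) • B) * (1 - (ε : ℂ) • B)ᴴ).PosSemidef) :
    0 ≤ ((σ j - ∑ i, σ i * M i) * Bᴴ).trace.re := by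
  refine nonneg_of_mul_nonneg_right ?_ two_pos
  refine nonneg_of_eventually_nonneg_mul_add_sq_mul
    (b := (∑ i, (σ i * B * M i * Bᴴ).trace - (σ j * B * Bᴴ).trace).re) ?_
  filter_upwards [hB] with ε hε
  have := hopt _ (hM.contractPOVM hε j)
  rw [exclusionErrorProb_contractPOVM_one_sub hσ (fun i => (hM.1 i).1)] at this
  simp only [conjTranspose_smul, Complex.star_def, Complex.conj_ofReal, Matrix.mul_smul,
    Matrix.smul_mul, trace_smul, smul_eq_mul, ← Finset.mul_sum, ← mul_sub, smul_smul,
    ← Complex.ofReal_mul, Complex.re_ofReal_mul] at this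
  linear_combination this

theorem IsPOVM.posSemidef_sub_of_optimal (j : ι) : (σ j - ∑ i, σ i * M i).PosSemidef := by
  refine posSemidef_of_forall_dotProduct_mulVec_nonneg fun x =>
    Complex.nonneg_of_forall_re_star_mul_nonneg fun w hw => ?_
  have := hM.re_trace_mul_conjTranspose_nonneg_of_optimal hσ hopt j
    (eventually_posSemidef_one_sub_mul_conjTranspose_of_rankOne x hw)
  rwa [conjTranspose_smul, (posSemidef_vecMulVec_self_star x).1.eq, Matrix.mul_smul, trace_smul,
    trace_mul_vecMulVec, smul_eq_mul] at this

theorem IsPOVM.isHermitian_sum_of_optimal : (∑ i, σ i * M i).IsHermitian := by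
  cases isEmpty_or_nonempty ι with
  | inl _ => simp [Finset.univ_eq_empty]
  | inr hι =>
    obtain ⟨j⟩ := hι
    simpa using (hσ j).sub (hM.posSemidef_sub_of_optimal hσ hopt j).1

end POVM

theorem state_exclusion_dual_feasible_of_optimal_general
    {d k : ℕ} (ρ : Fin k → Matrix (Fin d) (Fin d) ℂ)
    (hρ : ∀ i, (ρ i).PosSemidef)
    (p : Fin k → ℝ)
    (M : Fin k → Matrix (Fin d) (Fin d) ℂ)
    (hM : ∀ i, (M i).PosSemidef) (hMsum : ∑ i, M i = 1)
    (hopt : ∀ M' : Fin k → Matrix (Fin d) (Fin d) ℂ,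
      (∀ i, (M' i).PosSemidef) → (∑ i, M' i = 1) →
      (∑ i, ((p i : ℂ) • ρ i * M i).trace).re ≤ (∑ i, ((p i : ℂ) • ρ i * M' i).trace).re) :
    (∑ i, (p i : ℂ) • ρ i * M i).IsHermitian ∧
    ∀ i, ((p i : ℂ) • ρ i - ∑ j, (p j : ℂ) • ρ j * M j).PosSemidef := by
  have hσ : ∀ i, ((p i : ℂ) • ρ i).IsHermitian := fun i => (hρ i).1.smul (Complex.conj_ofReal _)
  have hPOVM : IsPOVM M := ⟨hM, hMsum⟩
  have hMopt : ∀ M', IsPOVM M' →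
      exclusionErrorProb (fun i => (p i : ℂ) • ρ i) M ≤ exclusionErrorProb _ M' :=
    fun M' hM' => hopt M' hM'.1 hM'.2
  exact ⟨hPOVM.isHermitian_sum_of_optimal hσ hMopt, hPOVM.posSemidef_sub_of_optimal hσ hMopt⟩

/-- Necessity direction of Theorem 1: if the measurement `M` is optimal for
state exclusion, then `N = ∑ ρ̃ᵢ Mᵢ` is Hermitian and `ρ̃ᵢ - N` is positive
semidefinite for all `i`. -/
theorem state_exclusion_dual_feasible_of_optimal
    {d k : ℕ} (ρ : Fin k → Matrix (Fin d) (Fin d) ℂ)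
    (hρ : ∀ i, (ρ i).PosSemidef) (hρtr : ∀ i, (ρ i).trace = 1)
    (p : Fin k → ℝ) (hp : ∀ i, 0 ≤ p i) (hpsum : ∑ i, p i = 1)
    (M : Fin k → Matrix (Fin d) (Fin d) ℂ)
    (hM : ∀ i, (M i).PosSemidef) (hMsum : ∑ i, M i = 1)
    (hopt : ∀ M' : Fin k → Matrix (Fin d) (Fin d) ℂ,
      (∀ i, (M' i).PosSemidef) → (∑ i, M' i = 1) →
      (∑ i, ((p i : ℂ) • ρ i * M i).trace).re ≤ (∑ i, ((p i : ℂ) • ρ i * M' i).trace).re) :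
    (∑ i, (p i : ℂ) • ρ i * M i).IsHermitian ∧
    ∀ i, ((p i : ℂ) • ρ i - ∑ j, (p j : ℂ) • ρ j * M j).PosSemidef :=
  state_exclusion_dual_feasible_of_optimal_general ρ hρ p M hM hMsum hopt
end

section
/- Let {ρ_i}_{i=1}^k be density matrices on a d-dimensional complex Hilbert space with k ≥ 2. If single state conclusive exclusion is possible, i.e. there exists a measurement (POVM) {M_i}_{i=1}^k with tr(ρ_i M_i) = 0 for every i, then ∑_{j≠l, j,l=1}^{k} F(ρ_j, ρ_l) ≤ k(k−2), where F denotes the fidelity. (Theorem 2.) -/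
open Matrix BigOperators ComplexOrder Classical

/-- The positive semidefinite square root of a matrix (junk value `0` if the
matrix is not positive semidefinite). -/
noncomputable def psqrt {d : ℕ} (A : Matrix (Fin d) (Fin d) ℂ) :
    Matrix (Fin d) (Fin d) ℂ :=
  if h : A.PosSemidef then
    h.1.eigenvectorUnitary.1 * diagonal ((↑) ∘ (√·) ∘ h.1.eigenvalues) *
      (star h.1.eigenvectorUnitary : Matrix (Fin d) (Fin d) ℂ)
  else 0

/-- The fidelity `F(ρ,σ) = tr((√ρ σ √ρ)^{1/2})` of two positive semidefinite
matrices. -/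
noncomputable def fidelity {d : ℕ} (ρ σ : Matrix (Fin d) (Fin d) ℂ) : ℝ :=
  (psqrt (psqrt ρ * σ * psqrt ρ)).trace.re

/-!
Writing `√ρ σ √ρ = Aᴴ A` with `A = √σ √ρ`, the fidelity is `tr |A| = tr (U A)` for a contraction
`U` (polar decomposition). Splitting `A = ∑ᵢ (√σ √Mᵢ) (√Mᵢ √ρ)` and applying Cauchy–Schwarz to
each term gives `F(ρ, σ) ≤ ∑ᵢ √tr(ρ Mᵢ) √tr(σ Mᵢ)`. For a fixed outcome `i` the numbers
`aⱼ = √tr(ρⱼ Mᵢ)` vanish at `j = i`, so Cauchy–Schwarz over the other `k - 1` indices gives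
`∑_{j ≠ l} aⱼ aₗ = (∑ aⱼ)² - ∑ aⱼ² ≤ (k - 2) ∑ aⱼ²`; summing over `i` and using
`∑ᵢ tr(ρⱼ Mᵢ) = 1` yields `k (k - 2)`.
-/

open scoped MatrixOrder

namespace Matrix

variable {n 𝕜 : Type*} [Fintype n] [DecidableEq n] [RCLike 𝕜]

lemma re_trace_mul_le (X Y : Matrix n n 𝕜) :
    RCLike.re (X * Y).trace ≤
      √(RCLike.re (X * Xᴴ).trace) * √(RCLike.re (Yᴴ * Y).trace) := by
  let _ := toMatrixSeminormedAddCommGroup (1 : Matrix n n 𝕜) PosSemidef.one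
  let _ := toMatrixInnerProductSpace (1 : Matrix n n 𝕜) PosSemidef.one
  have hinner (a b : Matrix n n 𝕜) : inner 𝕜 a b = (b * 1 * aᴴ).trace := rfl
  have h := re_inner_le_norm (𝕜 := 𝕜) Yᴴ X
  rw [norm_eq_sqrt_re_inner (𝕜 := 𝕜), norm_eq_sqrt_re_inner (𝕜 := 𝕜)] at h
  simp only [hinner, mul_one, conjTranspose_conjTranspose] at h
  rwa [mul_comm (√_)]

lemma re_trace_mul_le_of_mul_conjTranspose_le_one {U : Matrix n n 𝕜} (hU : U * Uᴴ ≤ 1)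
    (X Y : Matrix n n 𝕜) :
    RCLike.re (U * (X * Y)).trace ≤
      √(RCLike.re (Xᴴ * X).trace) * √(RCLike.re (Yᴴ * Y).trace) := by
  have hYU : RCLike.re (Y * U * (Y * U)ᴴ).trace ≤ RCLike.re (Yᴴ * Y).trace := by
    have h := (RCLike.nonneg_iff.mp ((le_iff.mp hU).mul_mul_conjTranspose_same Y).trace_nonneg).1
    rw [mul_sub, sub_mul, mul_one, trace_sub, map_sub, sub_nonneg, trace_mul_comm Y] at h
    simpa only [conjTranspose_mul, mul_assoc] using h
  calc RCLike.re (U * (X * Y)).trace = RCLike.re (Y * U * X).trace := by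
        rw [trace_mul_comm U, trace_mul_cycle Y]
    _ ≤ √(RCLike.re (Y * U * (Y * U)ᴴ).trace) * √(RCLike.re (Xᴴ * X).trace) :=
        re_trace_mul_le _ _
    _ ≤ √(RCLike.re (Xᴴ * X).trace) * √(RCLike.re (Yᴴ * Y).trace) := by
        rw [mul_comm]; gcongr

lemma exists_mul_conjTranspose_le_one_mul_eq_abs (A : Matrix n n 𝕜) :
    ∃ U : Matrix n n 𝕜, U * Uᴴ ≤ 1 ∧ U * A = CFC.abs A := by
  set P := CFC.abs A
  have hc (f : ℝ → ℝ) : ContinuousOn f (spectrum ℝ P) := finite_real_spectrum.continuousOn f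
  -- the pseudo-inverse of `P`: since `0⁻¹ = 0`, `x⁻¹ * x * x = x` holds on the whole spectrum
  set W := cfc (·⁻¹ : ℝ → ℝ) P
  have hW : Wᴴ = W := (cfc_predicate (·⁻¹ : ℝ → ℝ) P).star_eq
  have hAA : Aᴴ * A = P * P := by rw [← star_eq_conjTranspose, CFC.abs_mul_abs]
  have hWPP : W * P * P = P := by
    calc W * P * P = cfc (fun x : ℝ => x⁻¹ * x * x) P := by
          rw [cfc_mul _ _ P (hc _) (hc _), cfc_mul _ _ P (hc _) (hc _), cfc_id' ℝ P]
      _ = P := by simp only [inv_mul_mul_self, cfc_id' ℝ P]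
  refine ⟨W * Aᴴ, ?_, by rw [mul_assoc, hAA, ← mul_assoc, hWPP]⟩
  calc W * Aᴴ * (W * Aᴴ)ᴴ = W * (Aᴴ * A) * W := by
        rw [conjTranspose_mul, conjTranspose_conjTranspose, hW]; simp only [mul_assoc]
    _ = W * P * P * W := by rw [hAA, ← mul_assoc]
    _ = cfc (fun x : ℝ => x * x⁻¹) P := by
        rw [hWPP, cfc_mul _ _ P (hc _) (hc _), cfc_id' ℝ P]
    _ ≤ 1 := cfc_le_one _ _ fun x _ => mul_inv_le_one

lemma trace_mul_eq_trace_conjTranspose_mul_self {A B : Matrix n n 𝕜} (hA : 0 ≤ A) (hB : 0 ≤ B) :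
    (A * B).trace = ((CFC.sqrt A * CFC.sqrt B)ᴴ * (CFC.sqrt A * CFC.sqrt B)).trace := by
  have hsqrt_herm {C : Matrix n n 𝕜} : (CFC.sqrt C)ᴴ = CFC.sqrt C :=
    (CFC.sqrt_nonneg C).isSelfAdjoint.star_eq
  rw [conjTranspose_mul, hsqrt_herm, hsqrt_herm, mul_assoc, ← mul_assoc (CFC.sqrt A),
    CFC.sqrt_mul_sqrt_self A hA, trace_mul_comm (CFC.sqrt B), mul_assoc,
    CFC.sqrt_mul_sqrt_self B hB]

lemma re_trace_mul_nonneg {A B : Matrix n n 𝕜} (hA : 0 ≤ A) (hB : 0 ≤ B) :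
    0 ≤ RCLike.re (A * B).trace := by
  rw [trace_mul_eq_trace_conjTranspose_mul_self hA hB]
  exact (RCLike.nonneg_iff.mp (posSemidef_conjTranspose_mul_self _).trace_nonneg).1

end Matrix

lemma Matrix.PosSemidef.psqrt_eq_sqrt {d : ℕ} {A : Matrix (Fin d) (Fin d) ℂ}
    (hA : A.PosSemidef) : psqrt A = CFC.sqrt A := by
  rw [CFC.sqrt_eq_real_sqrt A hA.nonneg, cfcₙ_eq_cfc, hA.1.cfc_eq, psqrt, dif_pos hA]
  rfl

lemma fidelity_eq_re_trace_abs {d : ℕ} {ρ σ : Matrix (Fin d) (Fin d) ℂ}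
    (hρ : ρ.PosSemidef) (hσ : σ.PosSemidef) :
    fidelity ρ σ = (CFC.abs (CFC.sqrt σ * CFC.sqrt ρ)).trace.re := by
  have h : CFC.sqrt ρ * σ * CFC.sqrt ρ =
      star (CFC.sqrt σ * CFC.sqrt ρ) * (CFC.sqrt σ * CFC.sqrt ρ) := by
    rw [star_mul, (CFC.sqrt_nonneg ρ).star_eq, (CFC.sqrt_nonneg σ).star_eq]
    conv_lhs => rw [← CFC.sqrt_mul_sqrt_self σ hσ.nonneg]
    simp only [mul_assoc]
  rw [fidelity, hρ.psqrt_eq_sqrt, h,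
    (nonneg_iff_posSemidef.mp (star_mul_self_nonneg _)).psqrt_eq_sqrt, CFC.abs]

lemma fidelity_le_sum_sqrt_mul_sqrt {d : ℕ} {ι : Type*} [Fintype ι]
    {ρ σ : Matrix (Fin d) (Fin d) ℂ} (hρ : ρ.PosSemidef) (hσ : σ.PosSemidef)
    {M : ι → Matrix (Fin d) (Fin d) ℂ} (hM : ∀ i, (M i).PosSemidef) (hMsum : ∑ i, M i = 1) :
    fidelity ρ σ ≤ ∑ i, √(ρ * M i).trace.re * √(σ * M i).trace.re := by
  obtain ⟨U, hU, hUA⟩ := exists_mul_conjTranspose_le_one_mul_eq_abs (CFC.sqrt σ * CFC.sqrt ρ)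
  have hdecomp : CFC.sqrt σ * CFC.sqrt ρ = ∑ i, CFC.sqrt σ * M i * CFC.sqrt ρ := by
    rw [← Finset.sum_mul, ← Finset.mul_sum, hMsum, mul_one]
  rw [fidelity_eq_re_trace_abs hρ hσ, ← hUA, hdecomp, Finset.mul_sum, trace_sum, Complex.re_sum]
  gcongr with i
  have hsplit : CFC.sqrt σ * M i * CFC.sqrt ρ =
      CFC.sqrt σ * CFC.sqrt (M i) * (CFC.sqrt (M i) * CFC.sqrt ρ) := by
    conv_lhs => rw [← CFC.sqrt_mul_sqrt_self (M i) (hM i).nonneg]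
    simp only [mul_assoc]
  rw [hsplit, trace_mul_comm ρ, trace_mul_eq_trace_conjTranspose_mul_self hσ.nonneg (hM i).nonneg,
    trace_mul_eq_trace_conjTranspose_mul_self (hM i).nonneg hρ.nonneg, mul_comm (√_)]
  exact re_trace_mul_le_of_mul_conjTranspose_le_one hU _ _

lemma sum_sum_sdiff_mul_le {ι : Type*} [Fintype ι] [DecidableEq ι] {a : ι → ℝ} {i₀ : ι}
    (h : a i₀ = 0) :
    ∑ j, ∑ l ∈ Finset.univ \ {j}, a j * a l ≤
      ((Fintype.card ι : ℝ) - 2) * ∑ j, a j ^ 2 := by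
  have hpairs : ∑ j, ∑ l ∈ Finset.univ \ {j}, a j * a l = (∑ j, a j) ^ 2 - ∑ j, a j ^ 2 := by
    simp only [Finset.sdiff_singleton_eq_erase, ← Finset.mul_sum,
      Finset.sum_erase_eq_sub (Finset.mem_univ _), Finset.sum_sub_distrib, sq,
      ← Finset.sum_mul]
  have hcs : (∑ j, a j) ^ 2 ≤ ((Fintype.card ι : ℝ) - 1) * ∑ j, a j ^ 2 := by
    rw [← Finset.sum_erase _ h]
    calc (∑ j ∈ Finset.univ.erase i₀, a j) ^ 2
        ≤ (Finset.univ.erase i₀).card * ∑ j ∈ Finset.univ.erase i₀, a j ^ 2 :=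
          sq_sum_le_card_mul_sum_sq
      _ ≤ ((Fintype.card ι : ℝ) - 1) * ∑ j, a j ^ 2 := by
          have hcard : 1 ≤ Fintype.card ι := Fintype.card_pos_iff.mpr ⟨i₀⟩
          rw [Finset.card_erase_of_mem (Finset.mem_univ _), Finset.card_univ,
            Nat.cast_sub hcard, Nat.cast_one]
          exact mul_le_mul_of_nonneg_left
            (Finset.sum_le_sum_of_subset_of_nonneg (Finset.erase_subset _ _)
              fun j _ _ => sq_nonneg _)
            (sub_nonneg.mpr (Nat.one_le_cast.mpr hcard))
  linarith

theorem fidelity_sum_le_of_conclusive_exclusion_general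
    {d k : ℕ} (ρ : Fin k → Matrix (Fin d) (Fin d) ℂ)
    (hρ : ∀ i, (ρ i).PosSemidef) (hρtr : ∀ i, (ρ i).trace = 1)
    (M : Fin k → Matrix (Fin d) (Fin d) ℂ)
    (hM : ∀ i, (M i).PosSemidef) (hMsum : ∑ i, M i = 1)
    (hexcl : ∀ i, (ρ i * M i).trace = 0) :
    ∑ j, ∑ l ∈ Finset.univ \ {j}, fidelity (ρ j) (ρ l) ≤ (k : ℝ) * ((k : ℝ) - 2) := by
  set p : Fin k → Fin k → ℝ := fun j i => (ρ j * M i).trace.re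
  have hp_nonneg (j i) : 0 ≤ p j i := re_trace_mul_nonneg (hρ j).nonneg (hM i).nonneg
  have hp_sum (j) : ∑ i, p j i = 1 := by
    rw [← Complex.re_sum, ← trace_sum, ← Finset.mul_sum, hMsum, mul_one, hρtr, Complex.one_re]
  calc ∑ j, ∑ l ∈ Finset.univ \ {j}, fidelity (ρ j) (ρ l)
      ≤ ∑ j, ∑ l ∈ Finset.univ \ {j}, ∑ i, √(p j i) * √(p l i) := by
        gcongr with j _ l _
        exact fidelity_le_sum_sqrt_mul_sqrt (hρ j) (hρ l) hM hMsum
    _ = ∑ i, ∑ j, ∑ l ∈ Finset.univ \ {j}, √(p j i) * √(p l i) := by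
        simp only [Finset.sum_comm (s := Finset.univ \ {_})]
        exact Finset.sum_comm
    _ ≤ ∑ i, ((k : ℝ) - 2) * ∑ j, √(p j i) ^ 2 := by
        gcongr with i
        simpa only [Fintype.card_fin] using sum_sum_sdiff_mul_le (a := fun j => √(p j i)) (i₀ := i)
          (by simp [p, hexcl])
    _ = (k : ℝ) * ((k : ℝ) - 2) := by
        simp only [Real.sq_sqrt (hp_nonneg _ _), ← Finset.mul_sum]
        rw [Finset.sum_comm, Finset.sum_congr rfl fun j _ => hp_sum j]
        rw [Finset.sum_const, Finset.card_fin, nsmul_one, mul_comm]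

/-- Theorem 2: a necessary condition for single state conclusive exclusion. -/
theorem fidelity_sum_le_of_conclusive_exclusion
    {d k : ℕ} (hk : 2 ≤ k) (ρ : Fin k → Matrix (Fin d) (Fin d) ℂ)
    (hρ : ∀ i, (ρ i).PosSemidef) (hρtr : ∀ i, (ρ i).trace = 1)
    (M : Fin k → Matrix (Fin d) (Fin d) ℂ)
    (hM : ∀ i, (M i).PosSemidef) (hMsum : ∑ i, M i = 1)
    (hexcl : ∀ i, (ρ i * M i).trace = 0) :
    ∑ j, ∑ l ∈ Finset.univ \ {j}, fidelity (ρ j) (ρ l) ≤ (k : ℝ) * ((k : ℝ) - 2) :=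
  fidelity_sum_le_of_conclusive_exclusion_general ρ hρ hρtr M hM hMsum hexcl
end

section
/- Let k ≥ 3 and define unit vectors in ℂ^k by |ψ_i⟩ = (1/√(k−1)) ∑_{j≠i} |j⟩ for i = 1,…,k, where {|j⟩}_{j=1}^k is the standard orthonormal basis. Then (a) the projective measurement in the basis {|i⟩}_{i=1}^k conclusively excludes the set: ⟨i|ψ_i⟩ = 0 for every i; and (b) ∑_{j≠l, j,l=1}^{k} |⟨ψ_j|ψ_l⟩| = k(k−2), so the necessary fidelity condition ∑_{j≠l} F(|ψ_j⟩⟨ψ_j|, |ψ_l⟩⟨ψ_l|) ≤ k(k−2) is attained with equality. -/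
/-!
Two distinct vectors `ψᵢ, ψᵢ'` are both nonzero exactly off `{i, i'}`, so their overlap is
`(k - 2) |c|² = (k - 2)/(k - 1)`; summing over the `k (k - 1)` ordered pairs gives `k (k - 2)`.
-/

open Finset

section CuspVector

variable {ι : Type*} [Fintype ι] [DecidableEq ι]

def cuspVector {R : Type*} [Zero R] (c : R) (i : ι) : ι → R :=
  fun j => if j = i then 0 else c

theorem sum_star_mul_cuspVector_of_ne {R : Type*} [CommSemiring R] [StarRing R] (c : R)
    {i i' : ι} (h : i ≠ i') :
    ∑ m, star (cuspVector c i m) * cuspVector c i' m = (Fintype.card ι - 2) • (star c * c) := by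
  have hterm : ∀ m, star (cuspVector c i m) * cuspVector c i' m =
      if m ∈ univ \ {i, i'} then star c * c else 0 := by
    intro m
    by_cases hi : m = i <;> by_cases hi' : m = i' <;> simp [cuspVector, hi, hi']
  rw [Fintype.sum_congr _ _ hterm, sum_ite_mem, univ_inter, sum_const, card_univ_sdiff,
    card_pair h]

theorem norm_inner_cuspVector_of_ne {𝕜 : Type*} [RCLike 𝕜] (c : 𝕜) {i i' : ι} (h : i ≠ i') :
    ‖∑ m, (starRingEnd 𝕜) (cuspVector c i m) * cuspVector c i' m‖
      = (Fintype.card ι - 2 : ℕ) * ‖c‖ ^ 2 := by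
  simp only [starRingEnd_apply]
  rw [sum_star_mul_cuspVector_of_ne c h, ← starRingEnd_apply, RCLike.conj_mul, nsmul_eq_mul,
    norm_mul, RCLike.norm_natCast, ← RCLike.ofReal_pow, RCLike.norm_ofReal,
    abs_of_nonneg (by positivity)]

end CuspVector

theorem sum_sum_sdiff_singleton_const {ι M : Type*} [Fintype ι] [DecidableEq ι] [AddCommMonoid M]
    (a : M) : ∑ j : ι, ∑ _l ∈ univ \ {j}, a = (Fintype.card ι * (Fintype.card ι - 1)) • a := by
  simp only [sum_const, card_univ_sdiff, card_singleton, card_univ, smul_smul]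

/-- The states `|ψᵢ⟩ = (1/√(k-1)) ∑_{j≠i} |j⟩` are conclusively excluded by the
measurement in the standard basis, and they attain the necessary fidelity
condition `∑_{j≠l} |⟨ψⱼ|ψₗ⟩| = k(k-2)` with equality. -/
theorem cusp_states_exclusion_and_fidelity_sum
    {k : ℕ} (hk : 3 ≤ k) (ψ : Fin k → Fin k → ℂ)
    (hψ : ∀ i j, ψ i j = if j = i then 0 else ((1 / Real.sqrt ((k : ℝ) - 1) : ℝ) : ℂ)) :
    (∀ i, ψ i i = 0) ∧
    ∑ j, ∑ l ∈ Finset.univ \ {j},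
        ‖∑ m, (starRingEnd ℂ) (ψ j m) * ψ l m‖ = (k : ℝ) * ((k : ℝ) - 2) := by
  set c : ℂ := ((1 / Real.sqrt ((k : ℝ) - 1) : ℝ) : ℂ) with hc
  obtain rfl : ψ = cuspVector c := funext fun i => funext (hψ i)
  have hk' : (3 : ℝ) ≤ k := by exact_mod_cast hk
  have hnorm_sq : ‖c‖ ^ 2 = 1 / ((k : ℝ) - 1) := by
    rw [hc, Complex.norm_real, Real.norm_eq_abs, sq_abs, div_pow, Real.sq_sqrt (by linarith),
      one_pow]
  refine ⟨fun i => if_pos rfl, ?_⟩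
  have hoverlap : ∀ j : Fin k, ∀ l ∈ univ \ {j},
      ‖∑ m, (starRingEnd ℂ) (cuspVector c j m) * cuspVector c l m‖
        = ((k : ℝ) - 2) / ((k : ℝ) - 1) := by
    intro j l hl
    rw [norm_inner_cuspVector_of_ne c (by simpa [eq_comm] using hl), hnorm_sq, Fintype.card_fin,
      Nat.cast_sub (by omega)]
    push_cast
    ring
  rw [sum_congr rfl fun j _ => sum_congr rfl (hoverlap j), sum_sum_sdiff_singleton_const,
    Fintype.card_fin, nsmul_eq_mul, Nat.cast_mul, Nat.cast_sub (by omega)]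
  have hk_sub_one : (k : ℝ) - 1 ≠ 0 := by linarith
  field_simp
  ring
end

section
/- Let n ≥ 1 and 0 ≤ θ < π. For x ∈ {0,1}^n define Ψ_x ∈ ℂ^{2^n} by Ψ_x(r) = (−1)^{x·r} cos(θ/2)^{n−|r|} sin(θ/2)^{|r|} for r ∈ {0,1}^n, where |r| is the Hamming weight of r, and define ζ_x ∈ ℂ^{2^n} by ζ_x(0⃗) = 1/√(2^n) and ζ_x(r) = −(−1)^{x·r}/√(2^n) for r ≠ 0⃗. Then for every x ∈ {0,1}^n, ⟨Ψ_x|ζ_x⟩ = (1/√(2^n)) cos(θ/2)^n (2 − (1 + tan(θ/2))^n). -/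
open BigOperators

/-- The dot product `x·r = ∑ᵢ xᵢ rᵢ` of two bit strings. -/
def bdot {n : ℕ} (x r : Fin n → Bool) : ℕ :=
  ∑ i, if x i ∧ r i then 1 else 0

/-- The Hamming weight `|r| = ∑ᵢ rᵢ` of a bit string. -/
def hamming {n : ℕ} (r : Fin n → Bool) : ℕ :=
  ∑ i, if r i then 1 else 0

/-!
The signs `(-1)^{x·r}` of `Ψₓ(r)` and `ζₓ(r)` cancel, so the term of `⟨Ψₓ|ζₓ⟩` at `r` is
`∓ w(r)/√(2^n)` with `w(r) = cos(θ/2)^{n-|r|} sin(θ/2)^{|r|}`, the sign being `+` only at `r = 0`.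
The weights `w(r)` are the terms of the expanded product `∏ᵢ (cos(θ/2) + sin(θ/2))`, so the overlap
is `(2 cos(θ/2)^n - (cos(θ/2) + sin(θ/2))^n)/√(2^n)`; factor out `cos(θ/2)^n`, which is nonzero
because `0 ≤ θ < π`.
-/

@[simp]
theorem bdot_false_right {n : ℕ} (x : Fin n → Bool) : bdot x (fun _ => false) = 0 := by
  simp [bdot]

@[simp]
theorem hamming_false {n : ℕ} : hamming (fun _ : Fin n => false) = 0 := by
  simp [hamming]

theorem hamming_eq_card_filter {n : ℕ} (r : Fin n → Bool) :
    hamming r = (Finset.univ.filter fun i => r i = true).card := by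
  rw [hamming, Finset.card_filter]

theorem prod_ite_eq_pow_hamming {M : Type*} [CommMonoid M] {n : ℕ} (c s : M)
    (r : Fin n → Bool) :
    ∏ i, (if r i then s else c) = c ^ (n - hamming r) * s ^ hamming r := by
  have hcompl := Finset.card_filter_add_card_filter_not
    (s := (Finset.univ : Finset (Fin n))) (p := fun i => r i = true)
  rw [Finset.card_univ, Fintype.card_fin, ← hamming_eq_card_filter] at hcompl
  rw [Finset.prod_ite, Finset.prod_const, Finset.prod_const, ← hamming_eq_card_filter,
    mul_comm]
  congr 2
  omega

theorem sum_pow_sub_hamming_mul_pow_hamming {R : Type*} [CommSemiring R] (n : ℕ) (c s : R) :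
    ∑ r : Fin n → Bool, c ^ (n - hamming r) * s ^ hamming r = (c + s) ^ n := by
  simp_rw [← prod_ite_eq_pow_hamming, ← Fintype.prod_sum fun (_ : Fin n) (b : Bool) =>
    if b then s else c]
  simp [add_comm]

theorem cos_add_sin_pow_eq {x : ℝ} (hx : Real.cos x ≠ 0) (n : ℕ) :
    (Real.cos x + Real.sin x) ^ n = Real.cos x ^ n * (1 + Real.tan x) ^ n := by
  rw [Real.tan_eq_sin_div_cos, ← mul_pow, mul_one_add, mul_div_cancel₀ _ hx]

theorem conj_neg_one_pow_mul_self (k : ℕ) (a b : ℝ) :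
    starRingEnd ℂ ((-1) ^ k * (a : ℂ)) * ((-1) ^ k * (b : ℂ)) = ((a * b : ℝ) : ℂ) := by
  have hsign : (-1 : ℂ) ^ k * (-1) ^ k = 1 := by rw [← mul_pow]; norm_num
  simp only [map_mul, map_pow, map_neg, map_one, Complex.conj_ofReal, Complex.ofReal_mul]
  linear_combination (a : ℂ) * b * hsign

theorem pbr_overlap_general
    {n : ℕ} (θ : ℝ) (hθ0 : 0 ≤ θ) (hθ1 : θ < Real.pi)
    (Ψ ζ : (Fin n → Bool) → (Fin n → Bool) → ℂ)
    (hΨ : ∀ x r, Ψ x r = (-1 : ℂ) ^ bdot x r *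
      ((Real.cos (θ / 2) ^ (n - hamming r) * Real.sin (θ / 2) ^ hamming r : ℝ) : ℂ))
    (hζ : ∀ x r, ζ x r =
      if r = (fun _ => false) then ((1 / Real.sqrt (2 ^ n) : ℝ) : ℂ)
      else -(-1 : ℂ) ^ bdot x r * ((1 / Real.sqrt (2 ^ n) : ℝ) : ℂ)) :
    ∀ x : Fin n → Bool,
      ∑ r, (starRingEnd ℂ) (Ψ x r) * ζ x r =
        (((1 / Real.sqrt (2 ^ n)) * Real.cos (θ / 2) ^ n *
          (2 - (1 + Real.tan (θ / 2)) ^ n) : ℝ) : ℂ) := by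
  intro x
  set c := Real.cos (θ / 2)
  set s := Real.sin (θ / 2)
  set q : ℝ := 1 / Real.sqrt (2 ^ n)
  have hc : c ≠ 0 :=
    (Real.cos_pos_of_mem_Ioo ⟨by linarith [Real.pi_pos], by linarith⟩).ne'
  have hterm : ∀ r, starRingEnd ℂ (Ψ x r) * ζ x r =
      (((if r = fun _ => false then 2 * c ^ n else 0)
        - c ^ (n - hamming r) * s ^ hamming r) * q : ℝ) := by
    intro r
    rw [hΨ, hζ]
    split_ifs with hr
    · subst hr
      simp only [bdot_false_right, hamming_false, pow_zero, one_mul, Nat.sub_zero, mul_one,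
        Complex.conj_ofReal]
      push_cast
      ring
    · rw [neg_mul, mul_neg, conj_neg_one_pow_mul_self]
      push_cast
      ring
  rw [Finset.sum_congr rfl fun r _ => hterm r, ← Complex.ofReal_sum, ← Finset.sum_mul,
    Finset.sum_sub_distrib, Finset.sum_ite_eq', if_pos (Finset.mem_univ _),
    sum_pow_sub_hamming_mul_pow_hamming, cos_add_sin_pow_eq hc]
  congr 1
  ring

/-- The overlap of the PBR state `Ψₓ` with the measurement vector `ζₓ`:
`⟨Ψₓ|ζₓ⟩ = (1/√(2^n)) cos(θ/2)^n (2 - (1 + tan(θ/2))^n)`. -/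
theorem pbr_overlap
    {n : ℕ} (hn : 1 ≤ n) (θ : ℝ) (hθ0 : 0 ≤ θ) (hθ1 : θ < Real.pi)
    (Ψ ζ : (Fin n → Bool) → (Fin n → Bool) → ℂ)
    (hΨ : ∀ x r, Ψ x r = (-1 : ℂ) ^ bdot x r *
      ((Real.cos (θ / 2) ^ (n - hamming r) * Real.sin (θ / 2) ^ hamming r : ℝ) : ℂ))
    (hζ : ∀ x r, ζ x r =
      if r = (fun _ => false) then ((1 / Real.sqrt (2 ^ n) : ℝ) : ℂ)
      else -(-1 : ℂ) ^ bdot x r * ((1 / Real.sqrt (2 ^ n) : ℝ) : ℂ)) :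
    ∀ x : Fin n → Bool,
      ∑ r, (starRingEnd ℂ) (Ψ x r) * ζ x r =
        (((1 / Real.sqrt (2 ^ n)) * Real.cos (θ / 2) ^ n *
          (2 - (1 + Real.tan (θ / 2)) ^ n) : ℝ) : ℂ) :=
  pbr_overlap_general θ hθ0 hθ1 Ψ ζ hΨ hζ
end
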